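/- Let Ω ⊆ ℝⁿ be open and nonempty, h : Ω → ℝ continuous, and ρ : ℝⁿ → [0, ∞) an integrable probability density with support Ω. For r > 0 define ψ_r(k) := (1/r) log ∫_Ω ρ(y) exp(r(⟨k, y⟩ − h(y))) dy and ψ_∞(k) := sup_{y ∈ Ω} (⟨k, y⟩ − h(y)), and set Ω* := {k ∈ ℝⁿ : ψ_∞(k) < ∞}. Then: (i) for every k, the map r ↦ ψ_r(k) is nondecreasing on (0, ∞) and ψ_r(k) ≤ ψ_∞(k); (ii) ψ_r converges to ψ_∞ pointwise on Ω* as r → ∞, and the convergence is uniform on every compact subset of the interior of Ω*. -/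

import Mathlib

open MeasureTheory Filter
open scoped RealInnerProductSpace ENNReal Topology

/-!
Let `ν = ρ(y) dy` on `Ω`, a probability measure, and `g_k(y) = ⟪k, y⟫ - h y`. Then
`ψ_r(k) = log ‖exp ∘ g_k‖_{L^r(ν)}`, so (i) is the monotonicity of `L^r` norms in `r` on a
probability space together with `‖·‖_{L^r} ≤ ‖·‖_{L^∞} ≤ exp ψ_∞(k)`.

For the limit, if `c < g_{k₀}(y₀)` with `y₀ ∈ Ω`, continuity gives open `U ∋ k₀`, `V ∋ y₀` with
`g_k > c` on `V` for every `k ∈ U`, and `ν(V) > 0` since `ρ > 0` a.e. on `Ω`. Restricting the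
integral to `V` gives `ψ_r(k) ≥ c + log ν(V) / r` for all `k ∈ U`, which exceeds any `c' < c` for
large `r`, uniformly on `U`. Near a point of the interior of `Ω*` the matching upper bound comes
from `ψ_∞`, a supremum of affine functions: it is convex, hence continuous there. Compactness then
turns these local statements into uniform convergence on `K`.
-/

/-- The rescaled tilted log-moment-generating function
`ψ_r(k) = (1/r) log ∫_Ω ρ(y) exp(r(⟨k,y⟩ − h(y))) dy`, with values in `EReal`. -/
noncomputable def psiR {n : ℕ} (Ω : Set (EuclideanSpace ℝ (Fin n)))
    (ρ h : EuclideanSpace ℝ (Fin n) → ℝ) (r : ℝ) (k : EuclideanSpace ℝ (Fin n)) : EReal :=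
  (((1 : ℝ) / r : ℝ) : EReal) *
    ENNReal.log (∫⁻ y in Ω, ENNReal.ofReal (ρ y * Real.exp (r * (⟪k, y⟫ - h y))))

/-- The limiting support function `ψ_∞(k) = sup_{y ∈ Ω} (⟨k,y⟩ − h(y))`, in `EReal`. -/
noncomputable def psiInf {n : ℕ} (Ω : Set (EuclideanSpace ℝ (Fin n)))
    (h : EuclideanSpace ℝ (Fin n) → ℝ) (k : EuclideanSpace ℝ (Fin n)) : EReal :=
  ⨆ y ∈ Ω, (((⟪k, y⟫ - h y : ℝ)) : EReal)

section LpLowerBound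

variable {α ε : Type*} [MeasurableSpace α] {μ : Measure α} [TopologicalSpace ε]
  [ContinuousENorm ε]

theorem mul_rpow_measure_le_eLpNorm' {g : α → ε} {s : Set α} {C : ℝ≥0∞} {p : ℝ} (hp : 0 < p)
    (hs : MeasurableSet s) (hC : ∀ x ∈ s, C ≤ ‖g x‖ₑ) :
    C * μ s ^ (1 / p) ≤ eLpNorm' g p μ :=
  calc C * μ s ^ (1 / p) = eLpNorm' (fun _ => C) p (μ.restrict s) := by
        rw [eLpNorm'_const C hp, Measure.restrict_apply_univ, enorm_eq_self]
    _ ≤ eLpNorm' g p (μ.restrict s) :=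
        eLpNorm'_mono_enorm_ae hp.le (ae_restrict_of_forall_mem hs fun x hx => by
          simpa using hC x hx)
    _ ≤ eLpNorm' g p μ := eLpNorm'_mono_measure g Measure.restrict_le_self hp.le

theorem coe_add_log_div_le_log_eLpNorm'_exp {f : α → ℝ} {s : Set α} {c p : ℝ} (hp : 0 < p)
    (hs : MeasurableSet s) (hμs : μ s ≠ 0) (hμs' : μ s ≠ ⊤) (hf : ∀ x ∈ s, c ≤ f x) :
    ((c + Real.log (μ s).toReal / p : ℝ) : EReal) ≤
      ENNReal.log (eLpNorm' (fun x => Real.exp (f x)) p μ) := by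
  have hbound := mul_rpow_measure_le_eLpNorm' (μ := μ) (g := fun x => Real.exp (f x))
    (C := ENNReal.ofReal (Real.exp c)) hp hs fun x hx => by
      rw [Real.enorm_eq_ofReal (Real.exp_pos _).le]
      exact ENNReal.ofReal_le_ofReal (Real.exp_le_exp.2 (hf x hx))
  refine le_trans (le_of_eq ?_) (ENNReal.log_monotone hbound)
  rw [ENNReal.log_mul_add, ENNReal.log_rpow, ENNReal.log_ofReal_of_pos (Real.exp_pos c),
    Real.log_exp, ENNReal.log_pos_real hμs hμs', ← EReal.coe_mul, ← EReal.coe_add]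
  congr 1
  ring

end LpLowerBound

section WeightedVolume

variable {n : ℕ} {Ω : Set (EuclideanSpace ℝ (Fin n))} {ρ h : EuclideanSpace ℝ (Fin n) → ℝ}

noncomputable def weightedVolume (Ω : Set (EuclideanSpace ℝ (Fin n)))
    (ρ : EuclideanSpace ℝ (Fin n) → ℝ) : Measure (EuclideanSpace ℝ (Fin n)) :=
  (volume.restrict Ω).withDensity fun y => ENNReal.ofReal (ρ y)

theorem isProbabilityMeasure_weightedVolume (hΩ : MeasurableSet Ω) (hρ0 : ∀ y, 0 ≤ ρ y)
    (hρint : Integrable ρ) (hρ1 : ∫ y, ρ y = 1) (hρΩ : ∀ᵐ y, y ∉ Ω → ρ y = 0) :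
    IsProbabilityMeasure (weightedVolume Ω ρ) := by
  constructor
  have hcompl : ∫⁻ y in Ωᶜ, ENNReal.ofReal (ρ y) = 0 :=
    (setLIntegral_congr_fun_ae hΩ.compl (hρΩ.mono fun y hy hyΩ => by simp [hy hyΩ])).trans
      lintegral_zero
  rw [weightedVolume, withDensity_apply _ MeasurableSet.univ, Measure.restrict_univ,
    ← add_zero (∫⁻ _ in Ω, _), ← hcompl, lintegral_add_compl _ hΩ,
    ← ofReal_integral_eq_lintegral_ofReal hρint (Eventually.of_forall hρ0), hρ1,
    ENNReal.ofReal_one]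

theorem weightedVolume_pos (hρ : AEMeasurable ρ (volume.restrict Ω))
    (hρpos : ∀ᵐ y, y ∈ Ω → 0 < ρ y) {V : Set (EuclideanSpace ℝ (Fin n))} (hV : IsOpen V)
    (hVne : V.Nonempty) (hVΩ : V ⊆ Ω) : 0 < weightedVolume Ω ρ V := by
  rw [pos_iff_ne_zero, weightedVolume, Ne, withDensity_apply_eq_zero' hρ.ennreal_ofReal]
  refine ne_of_gt (lt_of_lt_of_le ?_ (measure_mono_ae (μ := volume.restrict Ω) (s := V) ?_))
  · rw [Measure.restrict_apply hV.measurableSet, Set.inter_eq_left.2 hVΩ]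
    exact hV.measure_pos volume hVne
  · filter_upwards [ae_restrict_of_ae hρpos] with y hy hyV
    exact ⟨by simpa using hy (hVΩ hyV), hyV⟩

theorem aemeasurable_exp_inner_sub (hΩ : MeasurableSet Ω) (hh : ContinuousOn h Ω)
    (k : EuclideanSpace ℝ (Fin n)) :
    AEMeasurable (fun y => Real.exp (⟪k, y⟫ - h y)) (weightedVolume Ω ρ) :=
  (Real.measurable_exp.comp_aemeasurable
    ((continuous_const.inner continuous_id).aemeasurable.sub (hh.aemeasurable hΩ))).mono_ac
    (withDensity_absolutelyContinuous _ _)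

theorem psiR_eq_log_eLpNorm' (hρ : AEMeasurable ρ (volume.restrict Ω)) (r : ℝ)
    (k : EuclideanSpace ℝ (Fin n)) :
    psiR Ω ρ h r k =
      ENNReal.log (eLpNorm' (fun y => Real.exp (⟪k, y⟫ - h y)) r (weightedVolume Ω ρ)) := by
  rw [psiR, eLpNorm'_eq_lintegral_enorm, ENNReal.log_rpow, weightedVolume,
    lintegral_withDensity_eq_lintegral_mul_non_measurable₀ _ hρ.ennreal_ofReal
      (Eventually.of_forall fun _ => ENNReal.ofReal_lt_top)]
  congr 3
  ext y
  rw [Pi.mul_apply, Real.enorm_eq_ofReal (Real.exp_pos _).le,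
    ENNReal.ofReal_rpow_of_pos (Real.exp_pos _), ← Real.exp_mul, mul_comm _ r,
    ENNReal.ofReal_mul' (Real.exp_pos _).le]

theorem psiR_mono (hΩ : MeasurableSet Ω) (hh : ContinuousOn h Ω)
    (hρ : AEMeasurable ρ (volume.restrict Ω)) [IsProbabilityMeasure (weightedVolume Ω ρ)]
    (k : EuclideanSpace ℝ (Fin n)) {r s : ℝ} (hr : 0 < r) (hrs : r ≤ s) :
    psiR Ω ρ h r k ≤ psiR Ω ρ h s k := by
  rw [psiR_eq_log_eLpNorm' hρ, psiR_eq_log_eLpNorm' hρ]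
  exact ENNReal.log_monotone <| eLpNorm'_le_eLpNorm'_of_exponent_le hr hrs _
    (aemeasurable_exp_inner_sub hΩ hh k).aestronglyMeasurable

theorem psiR_le_psiInf (hΩ : MeasurableSet Ω) (hρ : AEMeasurable ρ (volume.restrict Ω))
    [IsProbabilityMeasure (weightedVolume Ω ρ)] (k : EuclideanSpace ℝ (Fin n)) {r : ℝ}
    (hr : 0 < r) : psiR Ω ρ h r k ≤ psiInf Ω h k := by
  have hbound : ∀ᵐ y ∂weightedVolume Ω ρ,
      ‖Real.exp (⟪k, y⟫ - h y)‖ₑ ≤ ⨆ y ∈ Ω, ENNReal.ofReal (Real.exp (⟪k, y⟫ - h y)) := by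
    filter_upwards [(withDensity_absolutelyContinuous _ _).ae_le (ae_restrict_mem hΩ)] with y hy
    rw [Real.enorm_eq_ofReal (Real.exp_pos _).le]
    exact le_iSup₂ (f := fun y (_ : y ∈ Ω) => ENNReal.ofReal (Real.exp (⟪k, y⟫ - h y))) y hy
  calc psiR Ω ρ h r k
      ≤ ENNReal.log (⨆ y ∈ Ω, ENNReal.ofReal (Real.exp (⟪k, y⟫ - h y))) := by
        rw [psiR_eq_log_eLpNorm' hρ]
        exact ENNReal.log_monotone
          ((eLpNorm'_le_eLpNormEssSup hr).trans (eLpNormEssSup_le_of_ae_enorm_bound hbound))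
    _ = psiInf Ω h k := by
        rw [← ENNReal.logOrderIso_apply, OrderIso.map_iSup₂]
        simp [psiInf, ENNReal.log_ofReal_of_pos (Real.exp_pos _)]

theorem eventually_lt_psiR (hΩo : IsOpen Ω) (hh : ContinuousOn h Ω)
    (hρ : AEMeasurable ρ (volume.restrict Ω)) (hρpos : ∀ᵐ y, y ∈ Ω → 0 < ρ y)
    [IsProbabilityMeasure (weightedVolume Ω ρ)] {k₀ : EuclideanSpace ℝ (Fin n)} {c : EReal}
    (hc : c < psiInf Ω h k₀) : ∀ᶠ z in atTop ×ˢ 𝓝 k₀, c < psiR Ω ρ h z.1 z.2 := by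
  obtain ⟨c₁, hcc₁, hc₁⟩ := EReal.lt_iff_exists_real_btwn.1 hc
  obtain ⟨y₀, hy₀, hc₁y₀⟩ := lt_biSup_iff.1 hc₁
  obtain ⟨c₂, hc₁₂, hc₂⟩ := exists_between (EReal.coe_lt_coe_iff.1 hc₁y₀)
  have hcont : ContinuousAt (fun z : EuclideanSpace ℝ (Fin n) × EuclideanSpace ℝ (Fin n) =>
      ⟪z.1, z.2⟫ - h z.2) (k₀, y₀) :=
    continuous_inner.continuousAt.sub
      ((hh.continuousAt (hΩo.mem_nhds hy₀)).comp continuousAt_snd)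
  have hnhds : {z | c₂ < ⟪z.1, z.2⟫ - h z.2 ∧ z.2 ∈ Ω} ∈ 𝓝 (k₀, y₀) :=
    Filter.inter_mem (hcont.eventually (lt_mem_nhds hc₂))
      (continuousAt_snd.preimage_mem_nhds (hΩo.mem_nhds hy₀))
  obtain ⟨U, V, hU, hk₀U, hV, hy₀V, hUV⟩ := mem_nhds_prod_iff'.1 hnhds
  have hVΩ : V ⊆ Ω := fun y hy => (hUV (Set.mk_mem_prod hk₀U hy)).2
  set m := weightedVolume Ω ρ V
  have hm : m ≠ 0 := (weightedVolume_pos hρ hρpos hV ⟨y₀, hy₀V⟩ hVΩ).ne'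
  have hlim : Tendsto (fun r : ℝ => c₂ + Real.log m.toReal / r) atTop (𝓝 c₂) := by
    simpa using tendsto_const_nhds.add
      ((tendsto_const_nhds (x := Real.log m.toReal)).div_atTop tendsto_id)
  refine Filter.eventually_prod_iff.2 ⟨_, (hlim.eventually_const_lt hc₁₂).and
    (eventually_gt_atTop (0 : ℝ)), _, hU.mem_nhds hk₀U, fun {r} hr {k} hk => ?_⟩
  calc c < c₁ := hcc₁
    _ < ((c₂ + Real.log m.toReal / r : ℝ) : EReal) := EReal.coe_lt_coe_iff.2 hr.1
    _ ≤ psiR Ω ρ h r k := by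
      rw [psiR_eq_log_eLpNorm' hρ]
      exact coe_add_log_div_le_log_eLpNorm'_exp hr.2 hV.measurableSet hm (measure_ne_top _ _)
        fun y hy => (hUV (Set.mk_mem_prod hk hy)).1.le

theorem psiInf_ne_bot (hΩne : Ω.Nonempty) (k : EuclideanSpace ℝ (Fin n)) :
    psiInf Ω h k ≠ ⊥ := by
  obtain ⟨y, hy⟩ := hΩne
  exact ne_bot_of_le_ne_bot (EReal.coe_ne_bot (⟪k, y⟫ - h y))
    (le_iSup₂ (f := fun y (_ : y ∈ Ω) => ((⟪k, y⟫ - h y : ℝ) : EReal)) y hy)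

theorem psiInf_smul_add_smul_le {k₁ k₂ : EuclideanSpace ℝ (Fin n)} {a b M₁ M₂ : ℝ}
    (ha : 0 ≤ a) (hb : 0 ≤ b) (hab : a + b = 1) (h₁ : psiInf Ω h k₁ ≤ M₁)
    (h₂ : psiInf Ω h k₂ ≤ M₂) :
    psiInf Ω h (a • k₁ + b • k₂) ≤ ((a * M₁ + b * M₂ : ℝ) : EReal) := by
  refine iSup₂_le fun y hy => EReal.coe_le_coe_iff.2 ?_
  have hle : ∀ k : EuclideanSpace ℝ (Fin n), ∀ M : ℝ, psiInf Ω h k ≤ M → ⟪k, y⟫ - h y ≤ M :=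
    fun k M hM => EReal.coe_le_coe_iff.1 <|
      (le_iSup₂ (f := fun y (_ : y ∈ Ω) => ((⟪k, y⟫ - h y : ℝ) : EReal)) y hy).trans hM
  have hsplit : ⟪a • k₁ + b • k₂, y⟫ - h y = a * (⟪k₁, y⟫ - h y) + b * (⟪k₂, y⟫ - h y) := by
    rw [inner_add_left, real_inner_smul_left, real_inner_smul_left]
    linear_combination h y * hab
  rw [hsplit]
  gcongr
  exacts [hle k₁ M₁ h₁, hle k₂ M₂ h₂]

theorem convexOn_toReal_psiInf (hΩne : Ω.Nonempty) :
    ConvexOn ℝ {k | psiInf Ω h k < ⊤} fun k => (psiInf Ω h k).toReal := by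
  refine ⟨fun k₁ hk₁ k₂ hk₂ a b ha hb hab => ?_, fun k₁ hk₁ k₂ hk₂ a b ha hb hab => ?_⟩
  · exact (psiInf_smul_add_smul_le ha hb hab (EReal.le_coe_toReal hk₁.ne)
      (EReal.le_coe_toReal hk₂.ne)).trans_lt (EReal.coe_lt_top _)
  · have := (EReal.coe_toReal_le (psiInf_ne_bot hΩne _)).trans
      (psiInf_smul_add_smul_le ha hb hab (EReal.le_coe_toReal hk₁.ne)
        (EReal.le_coe_toReal hk₂.ne))
    exact_mod_cast this

theorem continuousAt_psiInf (hΩne : Ω.Nonempty) {k₀ : EuclideanSpace ℝ (Fin n)}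
    (hk₀ : k₀ ∈ interior {k | psiInf Ω h k < ⊤}) : ContinuousAt (psiInf Ω h) k₀ := by
  refine (EReal.continuous_coe_iff.2 continuous_id |>.continuousAt.comp
    ((convexOn_toReal_psiInf hΩne).continuousOn_interior.continuousAt
      (isOpen_interior.mem_nhds hk₀))).congr ?_
  filter_upwards [isOpen_interior.mem_nhds hk₀] with k hk
  exact EReal.coe_toReal (interior_subset hk).ne (psiInf_ne_bot hΩne k)

theorem tendsto_psiR_psiInf (hΩo : IsOpen Ω) (hh : ContinuousOn h Ω)
    (hρ : AEMeasurable ρ (volume.restrict Ω)) (hρpos : ∀ᵐ y, y ∈ Ω → 0 < ρ y)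
    [IsProbabilityMeasure (weightedVolume Ω ρ)] (k : EuclideanSpace ℝ (Fin n)) :
    Tendsto (fun r => psiR Ω ρ h r k) atTop (𝓝 (psiInf Ω h k)) := by
  refine tendsto_order.2 ⟨fun c hc => ?_, fun c hc => ?_⟩
  · exact (eventually_lt_psiR hΩo hh hρ hρpos hc).curry.mono fun _ hr => hr.self_of_nhds
  · filter_upwards [eventually_gt_atTop 0] with r hr
    exact (psiR_le_psiInf hΩo.measurableSet hρ k hr).trans_lt hc

theorem eventually_psiInf_le_psiR_add (hΩo : IsOpen Ω) (hΩne : Ω.Nonempty)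
    (hh : ContinuousOn h Ω) (hρ : AEMeasurable ρ (volume.restrict Ω))
    (hρpos : ∀ᵐ y, y ∈ Ω → 0 < ρ y) [IsProbabilityMeasure (weightedVolume Ω ρ)]
    {k₀ : EuclideanSpace ℝ (Fin n)} (hk₀ : k₀ ∈ interior {k | psiInf Ω h k < ⊤}) {ε : ℝ}
    (hε : 0 < ε) :
    ∀ᶠ z in atTop ×ˢ 𝓝 k₀, psiInf Ω h z.2 ≤ psiR Ω ρ h z.1 z.2 + (ε : EReal) := by
  set φ₀ := (psiInf Ω h k₀).toReal
  have hφ₀ : psiInf Ω h k₀ = φ₀ :=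
    (EReal.coe_toReal (interior_subset hk₀).ne (psiInf_ne_bot hΩne k₀)).symm
  have hupper : ∀ᶠ k in 𝓝 k₀, psiInf Ω h k < ((φ₀ + ε / 2 : ℝ) : EReal) :=
    (continuousAt_psiInf hΩne hk₀).eventually
      (gt_mem_nhds (by rw [hφ₀]; exact EReal.coe_lt_coe_iff.2 (by linarith)))
  have hlower := eventually_lt_psiR hΩo hh hρ hρpos (c := ((φ₀ - ε / 2 : ℝ) : EReal))
    (by rw [hφ₀]; exact EReal.coe_lt_coe_iff.2 (by linarith))
  filter_upwards [tendsto_snd.eventually hupper, hlower] with z hk hr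
  calc psiInf Ω h z.2 ≤ ((φ₀ - ε / 2 : ℝ) : EReal) + (ε : EReal) := by
        rw [← EReal.coe_add]
        exact hk.le.trans_eq (by congr 1; ring)
    _ ≤ psiR Ω ρ h z.1 z.2 + (ε : EReal) := by gcongr

end WeightedVolume

/-- monotone and locally uniform convergence of `ψ_r` to `ψ_∞`:
(i) `r ↦ ψ_r(k)` is nondecreasing on `(0,∞)` and bounded by `ψ_∞(k)`;
(ii) `ψ_r → ψ_∞` pointwise on `Ω* = {ψ_∞ < ∞}`, uniformly on compact subsets of the
interior of `Ω*`. -/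
theorem psiR_monotone_tendsto_psiInf (n : ℕ)
    (Ω : Set (EuclideanSpace ℝ (Fin n))) (hΩo : IsOpen Ω) (hΩne : Ω.Nonempty)
    (h : EuclideanSpace ℝ (Fin n) → ℝ) (hh : ContinuousOn h Ω)
    (ρ : EuclideanSpace ℝ (Fin n) → ℝ) (hρ0 : ∀ y, 0 ≤ ρ y)
    (hρint : Integrable ρ) (hρ1 : (∫ y, ρ y) = 1)
    (hρsupp : ∀ᵐ y, (y ∈ Ω → 0 < ρ y) ∧ (y ∉ Ω → ρ y = 0)) :
    (∀ k : EuclideanSpace ℝ (Fin n),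
      (∀ r s : ℝ, 0 < r → r ≤ s → psiR Ω ρ h r k ≤ psiR Ω ρ h s k) ∧
      (∀ r : ℝ, 0 < r → psiR Ω ρ h r k ≤ psiInf Ω h k)) ∧
    (∀ k : EuclideanSpace ℝ (Fin n), psiInf Ω h k < ⊤ →
      Tendsto (fun r : ℝ => psiR Ω ρ h r k) atTop (𝓝 (psiInf Ω h k))) ∧
    (∀ K : Set (EuclideanSpace ℝ (Fin n)), IsCompact K →
      K ⊆ interior {k | psiInf Ω h k < ⊤} →
      ∀ ε : ℝ, 0 < ε → ∃ R : ℝ, ∀ r : ℝ, R ≤ r → ∀ k ∈ K,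
        psiInf Ω h k ≤ psiR Ω ρ h r k + ((ε : ℝ) : EReal)) := by
  have hρ : AEMeasurable ρ (volume.restrict Ω) := hρint.aemeasurable.restrict
  have hρpos : ∀ᵐ y, y ∈ Ω → 0 < ρ y := hρsupp.mono fun _ hy => hy.1
  have := isProbabilityMeasure_weightedVolume hΩo.measurableSet hρ0 hρint hρ1
    (hρsupp.mono fun _ hy => hy.2)
  refine ⟨fun k => ⟨fun r s hr hrs => psiR_mono hΩo.measurableSet hh hρ k hr hrs,
    fun r hr => psiR_le_psiInf hΩo.measurableSet hρ k hr⟩,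
    fun k _ => tendsto_psiR_psiInf hΩo hh hρ hρpos k, fun K hK hKint ε hε => ?_⟩
  have hK := hK.mem_prod_nhdsSet_of_forall fun k₀ hk₀ =>
    eventually_psiInf_le_psiR_add hΩo hΩne hh hρ hρpos (hKint hk₀) hε
  exact eventually_atTop.1 ((Eventually.curry hK).mono fun _ hr => hr.self_of_nhdsSet)
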